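/- Let X be a geodesic metric space that is δ-hyperbolic with δ > 0, let C ⊆ X be a ρ-separated subset with ρ ≥ 20δ, and fix R with 2 + 2δ ≤ R ≤ ρ/2 − 3δ. Then the finiteness axiom (P3) holds for the projection distances {d_p}_{p∈C} with projection constant 4δ: for any distinct b, c ∈ C, the set {a ∈ C ∖ {b,c} : d_a(b,c) > 4δ} is finite. -/

import Mathlib

open Set

/-- A geodesic from `x` to `y`: an isometric embedding of `[0, dist x y]` with the
prescribed endpoints. -/
def IsGeodesicFrom {X : Type*} [MetricSpace X] (γ : ℝ → X) (x y : X) : Prop :=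
  γ 0 = x ∧ γ (dist x y) = y ∧
    ∀ s ∈ Icc (0:ℝ) (dist x y), ∀ t ∈ Icc (0:ℝ) (dist x y), dist (γ s) (γ t) = |s - t|

/-- A geodesic metric space: every pair of points is joined by a geodesic. -/
def GeodesicMetricSpace (X : Type*) [MetricSpace X] : Prop :=
  ∀ x y : X, ∃ γ : ℝ → X, IsGeodesicFrom γ x y

/-- The Gromov product `(b,c)_a`. -/
noncomputable def gromovProd {X : Type*} [MetricSpace X] (a b c : X) : ℝ :=
  (dist a b + dist a c - dist b c) / 2

/-- `δ`-hyperbolicity via `δ`-thin triangles: two sides of a geodesic triangle issuing from a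
common vertex stay `δ`-close up to the Gromov product (this is exactly the condition that
pairs of points of the triangle with the same image in the comparison tripod are `δ`-close). -/
def DeltaThin (X : Type*) [MetricSpace X] (δ : ℝ) : Prop :=
  ∀ (a b c : X) (γ₁ γ₂ : ℝ → X), IsGeodesicFrom γ₁ a b → IsGeodesicFrom γ₂ a c →
    ∀ t ∈ Icc (0:ℝ) (gromovProd a b c), dist (γ₁ t) (γ₂ t) ≤ δ

/-- A subset `C` is `ρ`-separated if distinct points of `C` are at distance at least `ρ`. -/
def Separated {X : Type*} [MetricSpace X] (C : Set X) (ρ : ℝ) : Prop :=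
  ∀ c ∈ C, ∀ c' ∈ C, c ≠ c' → ρ ≤ dist c c'

open scoped ENNReal

/-- The path metric of `X ∖ B_R(p)`: the distance from `u` to `v` is the infimum of the
lengths (total variations) of continuous paths from `u` to `v` avoiding the open ball
`B_R(p)`, and `∞` if there is no such path. -/
noncomputable def pathDist {X : Type*} [MetricSpace X] (p : X) (R : ℝ) (u v : X) : ℝ≥0∞ :=
  ⨅ γ ∈ {γ : ℝ → X | ContinuousOn γ (Icc 0 1) ∧ γ 0 = u ∧ γ 1 = v ∧
      ∀ t ∈ Icc (0:ℝ) 1, R ≤ dist (γ t) p},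
    eVariationOn γ (Icc (0:ℝ) 1)

/-- The projection `π_p(a)`: the set of points in which geodesics from `p` to `a` meet the
sphere `S_p = ∂B_R(p)`. -/
def projSet {X : Type*} [MetricSpace X] (p : X) (R : ℝ) (a : X) : Set X :=
  {x : X | dist x p = R ∧
    ∃ γ : ℝ → X, IsGeodesicFrom γ p a ∧ ∃ t ∈ Icc (0:ℝ) (dist p a), γ t = x}

/-- The projection distance `d_p(a,b) = diam(π_p(a) ∪ π_p(b))`, the diameter being taken in
the path metric of `X ∖ B_R(p)`. -/
noncomputable def projDist {X : Type*} [MetricSpace X] (p : X) (R : ℝ) (a b : X) : ℝ≥0∞ :=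
  ⨆ x ∈ projSet p R a ∪ projSet p R b, ⨆ y ∈ projSet p R a ∪ projSet p R b,
    pathDist p R x y

/-!
If the Gromov product `(b,c)_a` is at least `R + δ`, the geodesics from `a` to `b` and to `c`
are `δ`-close at distance `R + δ` from `a`; going out along one of them, across, and back along
the other gives a path of length `≤ 3δ` outside `B_R(a)`, so `d_a(b,c) ≤ 3δ`. Hence every `a`
with `d_a(b,c) > 4δ` has `(b,c)_a < R + δ` and thus lies within `R + 2δ` of a geodesic `[b,c]`.
Since `2(R + 2δ) < ρ`, a `ρ`-separated set has only finitely many points that close to the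
compact set `[b,c]`.
-/

section ProjectionDistances

open Metric
open scoped NNReal

variable {X : Type*} [MetricSpace X]

theorem gromovProd_nonneg (a b c : X) : 0 ≤ gromovProd a b c := by
  have := dist_triangle_left b c a
  unfold gromovProd; linarith

theorem gromovProd_le_dist_left (a b c : X) : gromovProd a b c ≤ dist a b := by
  have := dist_triangle a b c
  unfold gromovProd; linarith

theorem gromovProd_le_dist_right (a b c : X) : gromovProd a b c ≤ dist a c := by
  have := dist_triangle a c b
  unfold gromovProd; rw [dist_comm c b] at this; linarith

theorem gromovProd_comm (a b c : X) : gromovProd a b c = gromovProd a c b := by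
  unfold gromovProd; rw [dist_comm b c]; ring

theorem gromovProd_self (a b : X) : gromovProd a b b = dist a b := by
  unfold gromovProd; rw [dist_self]; ring

theorem dist_sub_gromovProd (a b c : X) : dist b a - gromovProd b a c = gromovProd a b c := by
  unfold gromovProd; rw [dist_comm b a]; ring

namespace IsGeodesicFrom

variable {γ : ℝ → X} {x y : X}

theorem lipschitzOnWith (h : IsGeodesicFrom γ x y) : LipschitzOnWith 1 γ (Icc 0 (dist x y)) :=
  LipschitzOnWith.of_dist_le_mul fun s hs t ht => by simp [h.2.2 s hs t ht, Real.dist_eq]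

theorem lipschitzOnWith_comp (h : IsGeodesicFrom γ x y) {φ : ℝ → ℝ} {s : Set ℝ} {K : ℝ≥0}
    (hφ : LipschitzOnWith K φ s) (hmaps : MapsTo φ s (Icc 0 (dist x y))) :
    LipschitzOnWith K (γ ∘ φ) s := by
  simpa using h.lipschitzOnWith.comp hφ hmaps

theorem dist_source (h : IsGeodesicFrom γ x y) {t : ℝ} (ht : t ∈ Icc 0 (dist x y)) :
    dist (γ t) x = t := by
  rw [← h.1, h.2.2 t ht 0 ⟨le_rfl, dist_nonneg⟩, sub_zero, abs_of_nonneg ht.1]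

theorem dist_target (h : IsGeodesicFrom γ x y) {t : ℝ} (ht : t ∈ Icc 0 (dist x y)) :
    dist (γ t) y = dist x y - t := by
  conv_lhs => rw [← h.2.1]
  rw [h.2.2 t ht _ ⟨dist_nonneg, le_rfl⟩, abs_sub_comm, abs_of_nonneg (by linarith [ht.2])]

end IsGeodesicFrom

theorem lipschitzWith_add_mul (a b : ℝ) : LipschitzWith ‖b‖₊ fun t : ℝ => a + b * t :=
  LipschitzWith.of_dist_le_mul fun s t => by
    simp [Real.dist_eq, ← mul_sub, abs_mul]

theorem LipschitzOnWith.ite_le {f g : ℝ → X} {a b c : ℝ} {K : ℝ≥0}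
    (hf : LipschitzOnWith K f (Icc a b)) (hg : LipschitzOnWith K g (Icc b c)) (hfg : f b = g b) :
    LipschitzOnWith K (fun t => if t ≤ b then f t else g t) (Icc a c) := by
  refine LipschitzOnWith.of_dist_le_mul fun s hs t ht => ?_
  wlog hst : s ≤ t generalizing s t
  · rw [dist_comm, dist_comm s]; exact this t ht s hs (le_of_not_ge hst)
  by_cases htb : t ≤ b
  · simpa [htb, hst.trans htb] using hf.dist_le_mul s ⟨hs.1, hst.trans htb⟩ t ⟨ht.1, htb⟩
  by_cases hsb : s ≤ b
  · have hbt := (not_le.1 htb).le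
    simp only [hsb, htb, if_true, if_false]
    calc dist (f s) (g t) ≤ dist (f s) (f b) + dist (g b) (g t) := hfg ▸ dist_triangle _ _ _
      _ ≤ K * dist s b + K * dist b t :=
        add_le_add (hf.dist_le_mul s ⟨hs.1, hsb⟩ b ⟨hs.1.trans hsb, le_rfl⟩)
          (hg.dist_le_mul b ⟨le_rfl, hbt.trans ht.2⟩ t ⟨hbt, ht.2⟩)
      _ = K * dist s t := by
        simp only [Real.dist_eq, abs_of_nonpos (sub_nonpos.2 hsb), abs_of_nonpos (sub_nonpos.2 hbt),
          abs_of_nonpos (sub_nonpos.2 hst)]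
        ring
  · simpa [hsb, htb]
      using hg.dist_le_mul s ⟨(not_le.1 hsb).le, hst.trans ht.2⟩ t ⟨(not_le.1 htb).le, ht.2⟩

theorem pathDist_le_of_lipschitzOnWith {p u v : X} {R : ℝ} {f : ℝ → X} {K : ℝ≥0}
    (hf : LipschitzOnWith K f (Icc 0 1)) (h₀ : f 0 = u) (h₁ : f 1 = v)
    (hout : ∀ t ∈ Icc (0 : ℝ) 1, R ≤ dist (f t) p) : pathDist p R u v ≤ K :=
  calc pathDist p R u v ≤ eVariationOn f (Icc 0 1) :=
        iInf₂_le f ⟨hf.continuousOn, h₀, h₁, hout⟩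
    _ ≤ K * eVariationOn id (Icc (0 : ℝ) 1) := hf.comp_eVariationOn_le (mapsTo_id _)
    _ = K := by
        have h := monotoneOn_id.eVariationOn_eq (s := Icc (0 : ℝ) 1) (a := 0) (b := 1)
          ⟨le_rfl, zero_le_one⟩ ⟨zero_le_one, le_rfl⟩
        rw [inter_self] at h
        simp [h]

theorem mem_Icc_and_exists_geodesic_of_mem_projSet {p a x : X} {R : ℝ}
    (hx : x ∈ projSet p R a) : R ∈ Icc 0 (dist p a) ∧ ∃ γ, IsGeodesicFrom γ p a ∧ γ R = x := by
  obtain ⟨hxR, γ, hγ, t, ht, rfl⟩ := hx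
  obtain rfl : t = R := by rw [← hxR, hγ.dist_source ht]
  exact ⟨ht, γ, hγ, rfl⟩

theorem pathDist_le_of_dist_le (hgeo : GeodesicMetricSpace X) {a u v : X} {R δ : ℝ}
    (hR : 0 ≤ R) (hδ : 0 ≤ δ) {γ₁ γ₂ : ℝ → X} (h₁ : IsGeodesicFrom γ₁ a u)
    (h₂ : IsGeodesicFrom γ₂ a v) (hu : R + δ ≤ dist a u) (hv : R + δ ≤ dist a v)
    (hclose : dist (γ₁ (R + δ)) (γ₂ (R + δ)) ≤ δ) :
    pathDist a R (γ₁ R) (γ₂ R) ≤ ENNReal.ofReal (3 * δ) := by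
  obtain ⟨γ, hγ⟩ := hgeo (γ₁ (R + δ)) (γ₂ (R + δ))
  set L := dist (γ₁ (R + δ)) (γ₂ (R + δ))
  have hL : 0 ≤ L := dist_nonneg
  have hK : ‖3 * L‖₊ ≤ ‖3 * δ‖₊ := by
    simpa [← NNReal.coe_le_coe, abs_of_nonneg hL, abs_of_nonneg hδ] using hclose
  let path : ℝ → X := fun t =>
    if t ≤ 1 / 3 then γ₁ (R + 3 * δ * t)
    else if t ≤ 2 / 3 then γ (-L + 3 * L * t) else γ₂ (R + 3 * δ + -(3 * δ) * t)
  have hout : ∀ t ∈ Icc (0 : ℝ) 1, R ≤ dist (path t) a := by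
    rintro t ⟨ht₀, ht₁⟩
    simp only [path]
    split_ifs with h₁₃ h₂₃
    · rw [h₁.dist_source ⟨by nlinarith, by nlinarith⟩]; nlinarith
    · have hs : -L + 3 * L * t ∈ Icc 0 L := ⟨by nlinarith, by nlinarith⟩
      have := dist_triangle (γ₁ (R + δ)) (γ (-L + 3 * L * t)) a
      rw [h₁.dist_source ⟨by linarith, hu⟩, dist_comm (γ₁ _), hγ.dist_source hs] at this
      linarith [hs.2]
    · rw [h₂.dist_source ⟨by nlinarith, by nlinarith⟩]; nlinarith
  have hlip : LipschitzOnWith ‖3 * δ‖₊ path (Icc 0 1) := by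
    refine LipschitzOnWith.ite_le (b := 1 / 3) ?_ (LipschitzOnWith.ite_le ?_ ?_ ?_) ?_
    · exact h₁.lipschitzOnWith_comp (lipschitzWith_add_mul _ _).lipschitzOnWith
        fun t ht => ⟨by nlinarith [ht.1], by nlinarith [ht.2]⟩
    · exact (hγ.lipschitzOnWith_comp (lipschitzWith_add_mul _ _).lipschitzOnWith
        fun t ht => ⟨by nlinarith [ht.1], by nlinarith [ht.2]⟩).weaken hK
    · rw [← nnnorm_neg]
      exact h₂.lipschitzOnWith_comp (lipschitzWith_add_mul _ _).lipschitzOnWith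
        fun t ht => ⟨by nlinarith [ht.2], by nlinarith [ht.1]⟩
    · rw [show -L + 3 * L * (2 / 3) = L by ring, show R + 3 * δ + -(3 * δ) * (2 / 3) = R + δ by ring]
      exact hγ.2.1
    · rw [show R + 3 * δ * (1 / 3) = R + δ by ring, show -L + 3 * L * (1 / 3) = 0 by ring, hγ.1,
        if_pos (by norm_num)]
  calc pathDist a R (γ₁ R) (γ₂ R) ≤ ‖3 * δ‖₊ :=
        pathDist_le_of_lipschitzOnWith hlip (by simp [path]) (by norm_num [path]) hout
    _ = ENNReal.ofReal (3 * δ) := by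
      rw [Real.nnnorm_of_nonneg (by positivity), ENNReal.ofReal_eq_coe_nnreal]

theorem pathDist_le_of_le_gromovProd (hgeo : GeodesicMetricSpace X) {δ : ℝ}
    (hthin : DeltaThin X δ) (hδ : 0 ≤ δ) {a u v x y : X} {R : ℝ}
    (h : R + δ ≤ gromovProd a u v) (hx : x ∈ projSet a R u) (hy : y ∈ projSet a R v) :
    pathDist a R x y ≤ ENNReal.ofReal (3 * δ) := by
  obtain ⟨hR, γ₁, h₁, rfl⟩ := mem_Icc_and_exists_geodesic_of_mem_projSet hx
  obtain ⟨-, γ₂, h₂, rfl⟩ := mem_Icc_and_exists_geodesic_of_mem_projSet hy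
  exact pathDist_le_of_dist_le hgeo hR.1 hδ h₁ h₂ (h.trans (gromovProd_le_dist_left a u v))
    (h.trans (gromovProd_le_dist_right a u v))
    (hthin a u v γ₁ γ₂ h₁ h₂ (R + δ) ⟨by linarith [hR.1], h⟩)

theorem projDist_le_of_le_gromovProd (hgeo : GeodesicMetricSpace X) {δ : ℝ}
    (hthin : DeltaThin X δ) (hδ : 0 ≤ δ) {a b c : X} {R : ℝ} (h : R + δ ≤ gromovProd a b c) :
    projDist a R b c ≤ ENNReal.ofReal (3 * δ) := by
  have hbc : ∀ u ∈ ({b, c} : Set X), ∀ v ∈ ({b, c} : Set X), R + δ ≤ gromovProd a u v := by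
    have hb : R + δ ≤ gromovProd a b b := gromovProd_self a b ▸ h.trans (gromovProd_le_dist_left ..)
    have hc : R + δ ≤ gromovProd a c c := gromovProd_self a c ▸ h.trans (gromovProd_le_dist_right ..)
    rintro u (rfl | rfl) v (rfl | rfl)
    exacts [hb, h, gromovProd_comm a u v ▸ h, hc]
  refine iSup₂_le fun x hx => iSup₂_le fun y hy => ?_
  obtain ⟨u, hu, hxu⟩ : ∃ u ∈ ({b, c} : Set X), x ∈ projSet a R u := by
    rcases hx with hx | hx <;> exact ⟨_, by simp, hx⟩
  obtain ⟨v, hv, hyv⟩ : ∃ v ∈ ({b, c} : Set X), y ∈ projSet a R v := by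
    rcases hy with hy | hy <;> exact ⟨_, by simp, hy⟩
  exact pathDist_le_of_le_gromovProd hgeo hthin hδ (hbc u hu v hv) hxu hyv

theorem dist_le_gromovProd_add (hgeo : GeodesicMetricSpace X) {δ : ℝ} (hthin : DeltaThin X δ)
    {γ : ℝ → X} {b c : X} (hγ : IsGeodesicFrom γ b c) (a : X) :
    dist a (γ (gromovProd b a c)) ≤ gromovProd a b c + δ := by
  obtain ⟨γ₁, h₁⟩ := hgeo b a
  have ht : gromovProd b a c ∈ Icc 0 (dist b a) :=
    ⟨gromovProd_nonneg b a c, gromovProd_le_dist_left b a c⟩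
  calc dist a (γ (gromovProd b a c))
      ≤ dist (γ₁ (gromovProd b a c)) a + dist (γ₁ (gromovProd b a c)) (γ (gromovProd b a c)) :=
        dist_triangle_left _ _ _
    _ ≤ gromovProd a b c + δ := by
        rw [h₁.dist_target ht, dist_sub_gromovProd]
        gcongr
        exact hthin b a c γ₁ γ h₁ hγ _ ⟨gromovProd_nonneg b a c, le_rfl⟩

theorem Separated.finite_of_subset_thickening {C K : Set X} {ρ r : ℝ} (hsep : Separated C ρ)
    (hK : IsCompact K) (hr : 2 * r < ρ) (hC : C ⊆ thickening r K) : C.Finite := by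
  obtain ⟨t, -, ht, hKt⟩ := finite_cover_balls_of_compact hK (by linarith : 0 < ρ / 2 - r)
  have hcenter : ∀ x ∈ C, ∃ z ∈ t, dist x z < ρ / 2 := by
    intro x hx
    obtain ⟨k, hk, hxk⟩ := mem_thickening_iff.1 (hC hx)
    obtain ⟨z, hz, hkz⟩ := mem_iUnion₂.1 (hKt hk)
    exact ⟨z, hz, by linarith [dist_triangle x k z, mem_ball.1 hkz]⟩
  choose! z hzt hxz using hcenter
  refine ht.of_injOn (f := z) hzt fun x hx y hy hxy => ?_
  by_contra hne
  linarith [hsep x hx y hy hne, hxy ▸ hxz x hx, hxz y hy, dist_triangle_right x y (z y)]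

end ProjectionDistances

theorem statement7_general {X : Type*} [MetricSpace X]
    (δ ρ R : ℝ) (hδ : 0 < δ)
    (hgeo : GeodesicMetricSpace X) (hthin : DeltaThin X δ)
    (C : Set X) (hsep : Separated C ρ)
    (hR₂ : R ≤ ρ / 2 - 3 * δ) :
    ∀ b ∈ C, ∀ c ∈ C, b ≠ c →
      {a : X | a ∈ C ∧ a ≠ b ∧ a ≠ c ∧
        ENNReal.ofReal (4 * δ) < projDist a R b c}.Finite := by
  intro b _ c _ _
  obtain ⟨γ, hγ⟩ := hgeo b c
  have hsegment : IsCompact (γ '' Icc 0 (dist b c)) :=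
    isCompact_Icc.image_of_continuousOn hγ.lipschitzOnWith.continuousOn
  refine Separated.finite_of_subset_thickening (fun x hx y hy => hsep x hx.1 y hy.1) hsegment
    (r := R + 2 * δ) (by linarith) ?_
  rintro a ⟨-, -, -, ha⟩
  have hgp : gromovProd a b c < R + δ := by
    by_contra! h
    refine ha.not_ge ((projDist_le_of_le_gromovProd hgeo hthin hδ.le h).trans ?_)
    exact ENNReal.ofReal_le_ofReal (by linarith)
  refine Metric.mem_thickening_iff.2 ⟨_, mem_image_of_mem γ ⟨gromovProd_nonneg b a c,
    gromovProd_le_dist_right b a c⟩, ?_⟩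
  linarith [dist_le_gromovProd_add hgeo hthin hγ a]

/-- **The finiteness axiom (P3)** for the associated projection distances, with projection
constant `4δ`: for distinct `b, c ∈ C` the set of `a ∈ C` with `d_a(b,c) > 4δ` is finite. -/
theorem statement7 {X : Type*} [MetricSpace X]
    (δ ρ R : ℝ) (hδ : 0 < δ)
    (hgeo : GeodesicMetricSpace X) (hthin : DeltaThin X δ)
    (C : Set X) (hsep : Separated C ρ) (hρ : 20 * δ ≤ ρ)
    (hR₁ : 2 + 2 * δ ≤ R) (hR₂ : R ≤ ρ / 2 - 3 * δ) :
    ∀ b ∈ C, ∀ c ∈ C, b ≠ c →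
      {a : X | a ∈ C ∧ a ≠ b ∧ a ≠ c ∧
        ENNReal.ofReal (4 * δ) < projDist a R b c}.Finite :=
  statement7_general δ ρ R hδ hgeo hthin C hsep hR₂
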